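/- arXiv:2008.06850 — 3 statements merged into one kernel-verified Lean document; each statement's English description precedes it below -/
import Mathlib

section
/- Let A be a real m×m matrix and let λ ∈ ℝ be such that every complex eigenvalue μ of A satisfies Re μ ≤ λ. Then for every ε > 0 there exists a constant C > 0 such that ‖e^{tA}‖ ≤ C·e^{(λ+ε)t} for all t ≥ 0. -/
/-!
Complexify `A` to `B`. A common eigenvector of the commuting matrices `B` and `exp B` shows that
every eigenvalue of `exp B` is `exp ν` for an eigenvalue `ν` of `B`, so the spectral radius of
`exp B` is at most `exp λ < exp (λ + ε)`. Gelfand's formula then gives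
`‖exp B ^ n‖ ≤ c · exp ((λ + ε) n)`, and writing `t = n + s` with `s ∈ [0, 1]` extends the bound to
all real `t ≥ 0`, at the cost of the factor `max_{s ∈ [0, 1]} ‖exp (s • B)‖`.
-/

open Matrix

/-- Matrix exponential of a real square matrix. -/
noncomputable def mexp {m : ℕ} (M : Matrix (Fin m) (Fin m) ℝ) : Matrix (Fin m) (Fin m) ℝ :=
  NormedSpace.exp M

/-- Frobenius norm of a real square matrix. -/
noncomputable def fnorm {m : ℕ} (M : Matrix (Fin m) (Fin m) ℝ) : ℝ :=
  Real.sqrt (∑ i, ∑ j, (M i j) ^ 2)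

/-- Euclidean norm of a vector in ℝ^m. -/
noncomputable def vnorm {m : ℕ} (x : Fin m → ℝ) : ℝ :=
  Real.sqrt (∑ i, (x i) ^ 2)

/-- Frobenius inner product ⟨M, N⟩ = trace(Mᵀ N). -/
def finner {m : ℕ} (M N : Matrix (Fin m) (Fin m) ℝ) : ℝ :=
  ∑ i, ∑ j, M i j * N i j

open NormedSpace Filter Asymptotics Module Module.End

attribute [local instance] Matrix.frobeniusSeminormedAddCommGroup
  Matrix.frobeniusNormedRing Matrix.frobeniusNormedAlgebra

theorem Module.End.exists_hasEigenvector_of_commute {K V : Type*} [Field K] [IsAlgClosed K]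
    [AddCommGroup V] [Module K V] [FiniteDimensional K V] {f g : End K V} (hfg : Commute f g)
    {μ : K} (hμ : f.HasEigenvalue μ) : ∃ ν v, f.HasEigenvector μ v ∧ g.HasEigenvector ν v := by
  have hmaps : ∀ x ∈ f.eigenspace μ, g x ∈ f.eigenspace μ :=
    fun x hx => mapsTo_genEigenspace_of_comm hfg μ 1 hx
  have : Nontrivial (f.eigenspace μ) := Submodule.nontrivial_iff_ne_bot.mpr hμ
  obtain ⟨ν, hν⟩ := exists_eigenvalue (g.restrict hmaps)
  obtain ⟨w, hw⟩ := hν.exists_hasEigenvector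
  have hw0 : (w : V) ≠ 0 := by simpa using hw.2
  refine ⟨ν, w, ⟨w.2, hw0⟩, ⟨?_, hw0⟩⟩
  simpa [mem_genEigenspace_one] using congrArg Subtype.val hw.apply_eq_smul

theorem spectrum.exists_norm_pow_le_mul_pow {A : Type*} [NormedRing A] [NormedAlgebra ℂ A]
    [CompleteSpace A] {a : A} {r : ℝ} (hr : spectralRadius ℂ a < ENNReal.ofReal r) :
    ∃ C, ∀ n : ℕ, ‖a ^ n‖ ≤ C * r ^ n := by
  have hr0 : 0 < r := ENNReal.ofReal_pos.mp (pos_of_gt hr)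
  have hev : ∀ᶠ n : ℕ in atTop, ‖a ^ n‖ ≤ r ^ n := by
    filter_upwards [(pow_norm_pow_one_div_tendsto_nhds_spectralRadius a).eventually_lt_const hr,
      eventually_ne_atTop 0] with n hn hn0
    have hlt := (ENNReal.ofReal_lt_ofReal_iff hr0).mp hn
    calc ‖a ^ n‖ = (‖a ^ n‖ ^ (1 / (n : ℝ))) ^ n := by
          rw [← Real.rpow_natCast, ← Real.rpow_mul (norm_nonneg _), one_div_mul_cancel (by simpa),
            Real.rpow_one]
      _ ≤ r ^ n := pow_le_pow_left₀ (by positivity) hlt.le n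
  have hO : (fun n => a ^ n) =O[atTop] (r ^ ·) :=
    IsBigO.of_bound 1 (by simpa [abs_of_pos hr0] using hev)
  obtain ⟨C, hC⟩ := (isBigO_nat_atTop_iff fun n h => absurd h (pow_ne_zero n hr0.ne')).mp hO
  exact ⟨C, fun n => by simpa [abs_of_pos hr0] using hC n⟩

theorem NormedSpace.exists_norm_exp_smul_le {A : Type*} [NormedRing A] [NormedAlgebra ℝ A]
    [CompleteSpace A] (a : A) {C ω : ℝ} (hC : ∀ n : ℕ, ‖exp a ^ n‖ ≤ C * Real.exp ω ^ n) :
    ∃ C' > 0, ∀ t : ℝ, 0 ≤ t → ‖exp (t • a)‖ ≤ C' * Real.exp (ω * t) := by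
  let : NormedAlgebra ℚ A := NormedAlgebra.restrictScalars ℚ ℝ A
  have hC0 : 0 ≤ C := by simpa using (norm_nonneg _).trans (hC 0)
  obtain ⟨s₀, -, hK⟩ := isCompact_Icc.exists_isMaxOn (Set.nonempty_Icc.mpr zero_le_one)
    (by fun_prop : Continuous fun s : ℝ => ‖exp (s • a)‖).continuousOn
  set K := ‖exp (s₀ • a)‖
  refine ⟨max (C * K * Real.exp |ω|) 1, by positivity, fun t ht => ?_⟩
  set n := ⌊t⌋₊
  have hs : t - n ∈ Set.Icc (0 : ℝ) 1 :=
    ⟨sub_nonneg.mpr (Nat.floor_le ht), by linarith [Nat.lt_floor_add_one t]⟩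
  have hsplit : exp (t • a) = exp a ^ n * exp ((t - n) • a) := by
    rw [← exp_nsmul, ← Nat.cast_smul_eq_nsmul ℝ, ← exp_add_of_commute
      (((Commute.refl a).smul_left _).smul_right _), ← add_smul, add_sub_cancel]
  have hexp : Real.exp ω ^ n ≤ Real.exp |ω| * Real.exp (ω * t) := by
    rw [← Real.exp_nat_mul, ← Real.exp_add, Real.exp_le_exp]
    nlinarith [neg_abs_le ω, abs_nonneg ω, hs.1, hs.2]
  calc ‖exp (t • a)‖ ≤ ‖exp a ^ n‖ * ‖exp ((t - n) • a)‖ := hsplit ▸ norm_mul_le _ _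
    _ ≤ C * Real.exp ω ^ n * K := by gcongr; exacts [hC n, hK hs]
    _ ≤ C * (Real.exp |ω| * Real.exp (ω * t)) * K := by gcongr
    _ = C * K * Real.exp |ω| * Real.exp (ω * t) := by ring
    _ ≤ max (C * K * Real.exp |ω|) 1 * Real.exp (ω * t) := by gcongr; exact le_max_left _ _

namespace Matrix

variable {n : Type*} [Fintype n] [DecidableEq n]

theorem exp_mulVec_of_mulVec_eq_smul {𝕜 : Type*} [RCLike 𝕜] {B : Matrix n n 𝕜} {v : n → 𝕜}
    {ν : 𝕜} (h : B *ᵥ v = ν • v) : exp B *ᵥ v = exp ν • v := by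
  have hpow (k : ℕ) : B ^ k *ᵥ v = ν ^ k • v := by
    induction k with
    | zero => simp
    | succ k ih => rw [pow_succ, ← mulVec_mulVec, h, mulVec_smul, ih, smul_smul, pow_succ']
  have hB := (exp_series_hasSum_exp' (𝕂 := 𝕜) B).map (mulVec.addMonoidHomLeft v)
    (continuous_id.matrix_mulVec continuous_const)
  refine hB.unique ?_
  convert (exp_series_hasSum_exp' (𝕂 := 𝕜) ν).smul_const v using 2 with k
  change ((k.factorial : 𝕜)⁻¹ • B ^ k) *ᵥ v = _
  rw [smul_mulVec, hpow, smul_smul, smul_eq_mul]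

theorem spectrum_exp_subset (B : Matrix n n ℂ) :
    spectrum ℂ (exp B) ⊆ Complex.exp '' spectrum ℂ B := by
  intro μ hμ
  rw [← spectrum_toLin', ← hasEigenvalue_iff_mem_spectrum] at hμ
  have hcomm : Commute (toLin' (exp B)) (toLin' B) := by
    rw [Commute, SemiconjBy, mul_eq_comp, mul_eq_comp, ← toLin'_mul, ← toLin'_mul,
      (Commute.exp_left (Commute.refl B)).eq]
  obtain ⟨ν, v, hμv, hνv⟩ := exists_hasEigenvector_of_commute hcomm hμ
  refine ⟨ν, ?_, ?_⟩
  · rw [← spectrum_toLin', ← hasEigenvalue_iff_mem_spectrum]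
    exact hasEigenvalue_of_hasEigenvector hνv
  · have hexp := exp_mulVec_of_mulVec_eq_smul (by simpa using hνv.apply_eq_smul)
    have hμv' := hμv.apply_eq_smul
    rw [toLin'_apply, hexp, ← Complex.exp_eq_exp_ℂ] at hμv'
    exact smul_left_injective ℂ hμv.2 hμv'

theorem spectralRadius_exp_le {B : Matrix n n ℂ} {lam : ℝ} (hB : ∀ μ ∈ spectrum ℂ B, μ.re ≤ lam) :
    spectralRadius ℂ (exp B) ≤ ENNReal.ofReal (Real.exp lam) := by
  refine iSup₂_le fun μ hμ => ?_
  obtain ⟨ν, hν, rfl⟩ := spectrum_exp_subset B hμ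
  change ‖Complex.exp ν‖ₑ ≤ _
  rw [← ofReal_norm, Complex.norm_exp]
  exact ENNReal.ofReal_le_ofReal (Real.exp_le_exp.mpr (hB ν hν))

theorem exp_map_ofReal (X : Matrix n n ℝ) :
    exp (X.map Complex.ofReal) = (exp X).map Complex.ofReal :=
  (map_exp Complex.ofRealHom.mapMatrix (continuous_id.matrix_map Complex.continuous_ofReal) X).symm

end Matrix

theorem fnorm_eq_norm {m : ℕ} (M : Matrix (Fin m) (Fin m) ℝ) : fnorm M = ‖M‖ := by
  simp only [fnorm, frobenius_norm_def, Real.sqrt_eq_rpow, Real.norm_eq_abs, sq_abs, Real.rpow_two]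

theorem fnorm_mexp_smul {m : ℕ} (A : Matrix (Fin m) (Fin m) ℝ) (t : ℝ) :
    fnorm (mexp (t • A)) = ‖exp (t • A.map Complex.ofReal)‖ := by
  rw [fnorm_eq_norm, mexp, ← frobenius_norm_map_eq _ Complex.ofReal Complex.norm_real,
    ← exp_map_ofReal,
    Matrix.map_smul _ _ fun a => (Complex.ofReal_mul t a).trans Complex.real_smul.symm]

/-- If every complex eigenvalue μ of the real matrix A satisfies Re μ ≤ λ,
then for every ε > 0 there is C > 0 with ‖e^{tA}‖ ≤ C·e^{(λ+ε)t} for all t ≥ 0. -/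
theorem stmt0 {m : ℕ} (A : Matrix (Fin m) (Fin m) ℝ) (lam : ℝ)
    (hspec : ∀ μ ∈ spectrum ℂ (A.map Complex.ofReal), μ.re ≤ lam) :
    ∀ ε : ℝ, 0 < ε → ∃ C : ℝ, 0 < C ∧
      ∀ t : ℝ, 0 ≤ t → fnorm (mexp (t • A)) ≤ C * Real.exp ((lam + ε) * t) := by
  intro ε hε
  set B := A.map Complex.ofReal
  have hρ : spectralRadius ℂ (exp B) < ENNReal.ofReal (Real.exp (lam + ε)) :=
    (spectralRadius_exp_le hspec).trans_lt <| (ENNReal.ofReal_lt_ofReal_iff (Real.exp_pos _)).mpr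
      (Real.exp_lt_exp.mpr (by linarith))
  obtain ⟨c, hc⟩ := spectrum.exists_norm_pow_le_mul_pow hρ
  obtain ⟨C, hC, hbound⟩ := exists_norm_exp_smul_le B hc
  exact ⟨C, hC, fun t ht => fnorm_mexp_smul A t ▸ hbound t ht⟩
end

section
/- Let A be a real m×m matrix all of whose entries are nonnegative, and let r = r(A) be its spectral radius (the maximum of |μ| over all complex eigenvalues μ of A). Then r is an eigenvalue of A, and every complex eigenvalue μ of A with μ ≠ r satisfies Re μ < r. In particular, A is Perron-like with principal eigenvalue s(A) = r(A). -/
/-!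
Take an eigenvalue `μ₀` with `‖μ₀‖ = r` and an eigenvector `v`. By the triangle inequality the
vector `w = |v|` is nonnegative, nonzero and satisfies `r w ≤ A w`. For `t > r` the Neumann series
`(t - A)⁻¹ = ∑ A^k / t^(k+1)` converges, because the resolvent is holomorphic outside the
spectral disc, so `(t - A)⁻¹` is entrywise nonnegative. If `r` were not an eigenvalue,
`(r - A)⁻¹` would be the limit of these matrices as `t → r⁺`, hence nonnegative, and applying it
to `(r - A) w ≤ 0` would give `w ≤ 0`, i.e. `w = 0`. The bound on `Re μ` is the equality case of
`Re μ ≤ ‖μ‖ ≤ r`.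
-/

open scoped ENNReal

-- The power series of `z ↦ (1 - z • a)⁻¹` converges on the whole disc where it is holomorphic.
theorem summable_norm_pow_smul_pow_of_lt_inv_spectralRadius {A : Type*} [NormedRing A]
    [NormedAlgebra ℂ A] [CompleteSpace A] {a : A} {z : ℂ}
    (hz : (‖z‖₊ : ℝ≥0∞) < (spectralRadius ℂ a)⁻¹) :
    Summable fun n => ‖z ^ n • a ^ n‖ := by
  obtain ⟨ρ, hzρ, hρ⟩ := ENNReal.lt_iff_exists_nnreal_btwn.mp hz
  have hρ₀ : 0 < ρ := by simpa using zero_le.trans_lt (ENNReal.coe_lt_coe.mp hzρ)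
  have hseries := (spectrum.hasFPowerSeriesOnBall_inverse_one_sub_smul ℂ a).exchange_radius
    ((spectrum.differentiableOn_inverse_one_sub_smul hρ).hasFPowerSeriesOnBall hρ₀)
  have hz_mem : z ∈ Metric.eball (0 : ℂ) _ := hseries.r_le.trans_lt' (by simpa using hzρ)
  simpa [ContinuousMultilinearMap.mkPiRing_apply] using
    FormalMultilinearSeries.summable_norm_apply _ hz_mem

open scoped ComplexOrder in
theorem Complex.re_lt_of_norm_le_of_ne {μ : ℂ} {r : ℝ} (hμ : ‖μ‖ ≤ r) (hne : μ ≠ r) :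
    μ.re < r := by
  refine (μ.re_le_norm.trans hμ).lt_of_ne fun hre => hne ?_
  have hμ₀ : 0 ≤ μ := Complex.re_eq_norm.mp (le_antisymm μ.re_le_norm (hre ▸ hμ))
  exact Complex.ext hre (Complex.nonneg_iff.mp hμ₀).2.symm

namespace Matrix

variable {n : Type*} [Fintype n]

theorem norm_mulVec_map_ofReal_le {A : Matrix n n ℝ} (hA : ∀ i j, 0 ≤ A i j) (v : n → ℂ) (i : n) :
    ‖(A.map Complex.ofReal *ᵥ v) i‖ ≤ (A *ᵥ fun j => ‖v j‖) i := by
  refine (norm_sum_le _ _).trans_eq (Finset.sum_congr rfl fun j _ => ?_)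
  simp [abs_of_nonneg (hA i j)]

section LinftyOp

attribute [local instance] Matrix.linftyOpSeminormedAddCommGroup
  Matrix.linftyOpNormedAddCommGroup Matrix.linftyOpNormedRing Matrix.linftyOpNormedAlgebra

theorem norm_apply_le_linfty_opNorm {m α : Type*} [Fintype m] [SeminormedAddCommGroup α]
    (M : Matrix m n α) (i : m) (j : n) : ‖M i j‖ ≤ ‖M‖ := by
  rw [linfty_opNorm_def]
  exact_mod_cast (Finset.single_le_sum (f := fun j => ‖M i j‖₊) (fun _ _ => zero_le)
    (Finset.mem_univ j)).trans (Finset.le_sup (f := fun i => ∑ j, ‖M i j‖₊) (Finset.mem_univ i))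

variable [DecidableEq n]

theorem summable_pow_of_spectralRadius_lt {A : Matrix n n ℝ} {t : ℝ}
    (ht : spectralRadius ℂ (A.map Complex.ofReal) < ENNReal.ofReal t) :
    Summable fun k => (t⁻¹ • A) ^ k := by
  have ht₀ : 0 < t := ENNReal.ofReal_pos.mp (zero_le.trans_lt ht)
  have hz : (‖(t⁻¹ : ℂ)‖₊ : ℝ≥0∞) < (spectralRadius ℂ (A.map Complex.ofReal))⁻¹ := by
    rw [← enorm_eq_nnnorm, ← ofReal_norm, ← Complex.ofReal_inv, Complex.norm_real,
      Real.norm_of_nonneg (inv_nonneg.2 ht₀.le), ENNReal.ofReal_inv_of_pos ht₀]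
    exact ENNReal.inv_lt_inv.2 ht
  have : CompleteSpace (Matrix n n ℂ) := FiniteDimensional.complete ℂ _
  have hpow (k : ℕ) :
      (t⁻¹ : ℂ) ^ k • A.map Complex.ofReal ^ k = ((t⁻¹ • A) ^ k).map Complex.ofReal := by
    rw [← smul_pow]
    convert (Matrix.map_pow (t⁻¹ • A) Complex.ofRealHom k).symm using 2
    · ext i j
      simp
    · rfl
  have hsum : Summable fun k => ‖((t⁻¹ • A) ^ k).map Complex.ofReal‖ := by
    simpa only [hpow] using summable_norm_pow_smul_pow_of_lt_inv_spectralRadius hz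
  refine Pi.summable.2 fun i => Pi.summable.2 fun j => Summable.of_norm ?_
  refine hsum.of_nonneg_of_le (fun _ => norm_nonneg _) fun k => ?_
  simpa using norm_apply_le_linfty_opNorm (((t⁻¹ • A) ^ k).map Complex.ofReal) i j

end LinftyOp

variable [DecidableEq n]

theorem exists_nonneg_norm_smul_le_mulVec {A : Matrix n n ℝ} (hA : ∀ i j, 0 ≤ A i j) {μ : ℂ}
    (hμ : μ ∈ spectrum ℂ (A.map Complex.ofReal)) :
    ∃ w : n → ℝ, 0 ≤ w ∧ w ≠ 0 ∧ ‖μ‖ • w ≤ A *ᵥ w := by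
  rw [← spectrum_toLin', ← Module.End.hasEigenvalue_iff_mem_spectrum] at hμ
  obtain ⟨v, hv⟩ := hμ.exists_hasEigenvector
  refine ⟨fun j => ‖v j‖, fun j => norm_nonneg _, fun h => hv.2 ?_, fun i => ?_⟩
  · ext j
    simpa using congrFun h j
  · have hAv : A.map Complex.ofReal *ᵥ v = μ • v := by simpa using hv.apply_eq_smul
    simpa [hAv] using norm_mulVec_map_ofReal_le hA v i

theorem nonpos_of_mulVec_nonpos {B : Matrix n n ℝ} (hB : IsUnit B.det) (hB' : ∀ i j, 0 ≤ B⁻¹ i j)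
    {w : n → ℝ} (hw : B *ᵥ w ≤ 0) : w ≤ 0 := by
  have hw_eq : w = B⁻¹ *ᵥ (B *ᵥ w) := by rw [mulVec_mulVec, nonsing_inv_mul B hB, one_mulVec]
  intro i
  rw [hw_eq]
  exact Finset.sum_nonpos fun j _ => mul_nonpos_of_nonneg_of_nonpos (hB' i j) (hw j)

theorem inv_smul_one_sub_apply_nonneg {A : Matrix n n ℝ} (hA : ∀ i j, 0 ≤ A i j) {t : ℝ}
    (ht : spectralRadius ℂ (A.map Complex.ofReal) < ENNReal.ofReal t) (i j : n) :
    0 ≤ (t • 1 - A)⁻¹ i j := by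
  have ht₀ : 0 < t := ENNReal.ofReal_pos.mp (zero_le.trans_lt ht)
  have hsum := summable_pow_of_spectralRadius_lt ht
  have hinv : (t • 1 - A)⁻¹ = t⁻¹ • ∑' k, (t⁻¹ • A) ^ k := by
    refine inv_eq_right_inv ?_
    rw [show t • 1 - A = t • (1 - t⁻¹ • A) by rw [smul_sub, smul_inv_smul₀ ht₀.ne'],
      smul_mul_smul, mul_inv_cancel₀ ht₀.ne', one_smul, hsum.one_sub_mul_tsum_pow]
  have hentry : (∑' k, (t⁻¹ • A) ^ k) i j = ∑' k, ((t⁻¹ • A) ^ k) i j :=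
    (congrFun (tsum_apply hsum) j).trans (tsum_apply (Pi.summable.1 hsum i))
  rw [hinv, smul_apply, hentry]
  exact mul_nonneg (inv_nonneg.2 ht₀.le) (tsum_nonneg fun k =>
    pow_apply_nonneg (fun i j => mul_nonneg (inv_nonneg.2 ht₀.le) (hA i j)) k i j)

theorem inv_smul_one_sub_apply_nonneg_of_isUnit {A : Matrix n n ℝ} (hA : ∀ i j, 0 ≤ A i j)
    {r : ℝ} (hr₀ : 0 ≤ r) (hr : spectralRadius ℂ (A.map Complex.ofReal) ≤ ENNReal.ofReal r)
    (hu : IsUnit (r • 1 - A).det) (i j : n) : 0 ≤ (r • 1 - A)⁻¹ i j := by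
  have hinv : ContinuousAt (fun t : ℝ => (t • 1 - A)⁻¹) r :=
    (continuousAt_matrix_inv _ (NormedRing.inverse_continuousAt hu.unit)).comp (x := r)
      (f := fun t : ℝ => t • (1 : Matrix n n ℝ) - A) (by fun_prop)
  have hcont : ContinuousAt (fun t : ℝ => (t • 1 - A)⁻¹ i j) r :=
    (continuous_id.matrix_elem i j).continuousAt.comp hinv
  refine ge_of_tendsto (hcont.tendsto.mono_left (nhdsWithin_le_nhds (s := Set.Ioi r))) ?_
  filter_upwards [self_mem_nhdsWithin] with t (ht : r < t)
  exact inv_smul_one_sub_apply_nonneg hA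
    (hr.trans_lt ((ENNReal.ofReal_lt_ofReal_iff (hr₀.trans_lt ht)).2 ht)) i j

end Matrix

theorem stmt4_general {m : ℕ} (A : Matrix (Fin m) (Fin m) ℝ)
    (hA : ∀ i j, 0 ≤ A i j) (r : ℝ)
    (hr : IsGreatest {x : ℝ | ∃ μ ∈ spectrum ℂ (A.map Complex.ofReal), x = ‖μ‖} r) :
    r ∈ spectrum ℝ A ∧
      ∀ μ ∈ spectrum ℂ (A.map Complex.ofReal), μ ≠ (r : ℂ) → μ.re < r := by
  obtain ⟨⟨μ₀, hμ₀, hr_eq⟩, hr_max⟩ := hr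
  have hle : ∀ μ ∈ spectrum ℂ (A.map Complex.ofReal), ‖μ‖ ≤ r := fun μ hμ => hr_max ⟨μ, hμ, rfl⟩
  refine ⟨?_, fun μ hμ hne => Complex.re_lt_of_norm_le_of_ne (hle μ hμ) hne⟩
  have hρ : spectralRadius ℂ (A.map Complex.ofReal) ≤ ENNReal.ofReal r :=
    iSup₂_le fun μ hμ => by
      rw [← enorm_eq_nnnorm, ← ofReal_norm]
      exact ENNReal.ofReal_le_ofReal (hle μ hμ)
  obtain ⟨w, hw₀, hw, hAw⟩ := Matrix.exists_nonneg_norm_smul_le_mulVec hA hμ₀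
  rw [spectrum.mem_iff, Algebra.algebraMap_eq_smul_one, Matrix.isUnit_iff_isUnit_det]
  intro hu
  have hr₀ : 0 ≤ r := hr_eq ▸ norm_nonneg μ₀
  refine hw (le_antisymm (Matrix.nonpos_of_mulVec_nonpos hu
    (Matrix.inv_smul_one_sub_apply_nonneg_of_isUnit hA hr₀ hρ hu) ?_) hw₀)
  rw [Matrix.sub_mulVec, Matrix.smul_mulVec, Matrix.one_mulVec, hr_eq]
  exact sub_nonpos.2 hAw

/-- If A is an m×m real matrix (m ≥ 1) with nonnegative entries and spectral
radius r, then r is an eigenvalue of A and every complex eigenvalue μ ≠ r satisfies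
Re μ < r; i.e. A is Perron-like with principal eigenvalue r. -/
theorem stmt4 {m : ℕ} (hm : 0 < m) (A : Matrix (Fin m) (Fin m) ℝ)
    (hA : ∀ i j, 0 ≤ A i j) (r : ℝ)
    (hr : IsGreatest {x : ℝ | ∃ μ ∈ spectrum ℂ (A.map Complex.ofReal), x = ‖μ‖} r) :
    r ∈ spectrum ℝ A ∧
      ∀ μ ∈ spectrum ℂ (A.map Complex.ofReal), μ ≠ (r : ℂ) → μ.re < r :=
  stmt4_general A hA r hr
end

section
/- Let A be a real m×m matrix all of whose entries are nonnegative, and let r = r(A) be its spectral radius. Then r is an eigenvalue of A and, writing ν for the cyclic order of GE_r(A), the dominant eigenspace DE_r(A) = (A − rI)^{ν−1}(GE_r(A)) has a basis consisting of vectors all of whose coordinates are nonnegative. -/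
/-!
For `t > r` the resolvent `(t - A)⁻¹ = ∑ₖ Aᵏ / tᵏ⁺¹` converges by Gelfand's formula and has
nonnegative entries. Applied to `|v|`, for `v` an eigenvector of an eigenvalue of modulus `r`, it
is at least `|v| / (t - r)`; so it blows up as `t ↓ r` and `r` cannot lie in the resolvent set.

The Fitting decomposition of `A - r` splits `ℝᵐ` into `GE_r(A)` and an `A`-invariant complement on
which `A - r` is invertible. On `GE_r(A)` the resolvent is a finite Laurent series in `t - r`
with a pole of order `ν`, and on the complement it stays bounded; hence `(t - r)^ν (t - A)⁻¹`
tends, as `t ↓ r`, to `(A - r)^(ν-1)` composed with the projection onto `GE_r(A)`. This limit is a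
nonnegative matrix whose column space is `DE_r(A)`, and a maximal linearly independent set of its
columns is the basis.
-/

open Matrix

/-- The generalized eigenspace GE_s(A) = {x : (A - s•I)^k x = 0 for some k ≥ 1},
as a submodule of ℝ^m. -/
def GEsub {m : ℕ} (A : Matrix (Fin m) (Fin m) ℝ) (s : ℝ) : Submodule ℝ (Fin m → ℝ) where
  carrier := {x | ∃ k : ℕ, 1 ≤ k ∧ ((A - s • 1) ^ k).mulVec x = 0}
  zero_mem' := ⟨1, le_refl 1, Matrix.mulVec_zero _⟩
  add_mem' := by
    rintro a b ⟨k, hk, ha⟩ ⟨l, hl, hb⟩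
    refine ⟨max k l, le_trans hk (le_max_left _ _), ?_⟩
    have h1 : ((A - s • 1) ^ (max k l)).mulVec a = 0 := by
      have h : (A - s • 1) ^ (max k l) = (A - s • 1) ^ (max k l - k) * (A - s • 1) ^ k := by
        rw [← pow_add]; congr 1; omega
      rw [h, ← Matrix.mulVec_mulVec, ha, Matrix.mulVec_zero]
    have h2 : ((A - s • 1) ^ (max k l)).mulVec b = 0 := by
      have h : (A - s • 1) ^ (max k l) = (A - s • 1) ^ (max k l - l) * (A - s • 1) ^ l := by
        rw [← pow_add]; congr 1; omega
      rw [h, ← Matrix.mulVec_mulVec, hb, Matrix.mulVec_zero]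
    rw [Matrix.mulVec_add, h1, h2, add_zero]
  smul_mem' := by
    rintro c a ⟨k, hk, ha⟩
    exact ⟨k, hk, by rw [Matrix.mulVec_smul, ha, smul_zero]⟩


open Filter Topology
open scoped NNReal

theorem spectrum.eventually_nnnorm_pow_le {𝔄 : Type*} [NormedRing 𝔄] [NormedAlgebra ℂ 𝔄]
    [CompleteSpace 𝔄] {a : 𝔄} {q : ℝ≥0} (h : spectralRadius ℂ a < q) :
    ∀ᶠ k in atTop, ‖a ^ k‖₊ ≤ q ^ k := by
  filter_upwards [(pow_nnnorm_pow_one_div_tendsto_nhds_spectralRadius a).eventually_lt_const h,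
    eventually_ge_atTop 1] with k hk hk1
  have hk0 : (k : ℝ) ≠ 0 := by positivity
  have := ENNReal.rpow_le_rpow hk.le (by positivity : (0 : ℝ) ≤ k)
  rw [← ENNReal.rpow_mul, one_div_mul_cancel hk0, ENNReal.rpow_one, ENNReal.rpow_natCast] at this
  exact_mod_cast this

section Resolvent

variable {𝕜 𝔄 : Type*} [Field 𝕜] [Ring 𝔄] [Algebra 𝕜 𝔄]

theorem Commute.resolvent_left {a b : 𝔄} (h : Commute a b) (t : 𝕜) :
    Commute (resolvent a t) b := by
  by_cases ht : IsUnit (algebraMap 𝕜 𝔄 t - a)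
  · rw [resolvent, ← ht.unit_spec, Ring.inverse_unit]
    refine Commute.units_inv_left ?_
    rw [ht.unit_spec]
    exact (Algebra.commute_algebraMap_left t b).sub_left h
  · rw [resolvent, Ring.inverse_non_unit _ ht]
    exact Commute.zero_left b

theorem pow_smul_resolvent_eq {a : 𝔄} {t : 𝕜} (ht : t ∈ resolventSet 𝕜 a) (r : 𝕜) (ν : ℕ) :
    (t - r) ^ ν • resolvent a t = ∑ i ∈ Finset.range ν,
      (t - r) ^ i • (a - algebraMap 𝕜 𝔄 r) ^ (ν - 1 - i) +
        resolvent a t * (a - algebraMap 𝕜 𝔄 r) ^ ν := by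
  set N := a - algebraMap 𝕜 𝔄 r
  have hgeom := (Algebra.commute_algebraMap_left (t - r) N).mul_geom_sum₂ ν
  rw [show algebraMap 𝕜 𝔄 (t - r) - N = algebraMap 𝕜 𝔄 t - a by simp only [N, map_sub]; abel]
    at hgeom
  have := congrArg (resolvent a t * ·) hgeom
  simp only [← mul_assoc, resolvent, Ring.inverse_mul_cancel _ ht, one_mul, mul_sub, ← map_pow,
    ← Algebra.commutes, ← Algebra.smul_def] at this
  rw [this, resolvent, sub_add_cancel]

variable [TopologicalSpace 𝕜] [IsTopologicalRing 𝕜] [TopologicalSpace 𝔄] [IsTopologicalRing 𝔄]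
  [ContinuousSMul 𝕜 𝔄]

theorem tendsto_pow_smul_resolvent_mul {a b : 𝔄} {r : 𝕜} {ν : ℕ} (hν : 0 < ν)
    (hb : (a - algebraMap 𝕜 𝔄 r) ^ ν * b = 0) {l : Filter 𝕜} (hl : l ≤ 𝓝 r)
    (hres : ∀ᶠ t in l, t ∈ resolventSet 𝕜 a) :
    Tendsto (fun t => (t - r) ^ ν • resolvent a t * b) l
      (𝓝 ((a - algebraMap 𝕜 𝔄 r) ^ (ν - 1) * b)) := by
  set N := a - algebraMap 𝕜 𝔄 r
  have hQ : Continuous fun t : 𝕜 => ∑ i ∈ Finset.range ν, (t - r) ^ i • N ^ (ν - 1 - i) := by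
    fun_prop
  have hQr : ∑ i ∈ Finset.range ν, (r - r) ^ i • N ^ (ν - 1 - i) = N ^ (ν - 1) := by
    rw [sub_self, Finset.sum_eq_single 0 (fun i _ hi => by rw [zero_pow hi, zero_smul])
      (fun h => absurd (Finset.mem_range.mpr hν) h), pow_zero, one_smul, Nat.sub_zero]
  refine (hQr ▸ ((hQ.tendsto r).mono_left hl).mul_const b).congr' ?_
  filter_upwards [hres] with t ht
  rw [pow_smul_resolvent_eq ht, add_mul, mul_assoc, hb, mul_zero, add_zero]

end Resolvent

open LinearMap in
theorem Module.End.exists_fitting_projection {R M : Type*} [Ring R] [AddCommGroup M]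
    [Module R M] [IsNoetherian R M] [IsArtinian R M] (g : Module.End R M) :
    ∃ p : Module.End R M, IsIdempotentElem p ∧ Commute g p ∧
      (∀ x, p x = 0 ↔ ∃ k, (g ^ k) x = 0) ∧ ∀ x, g (p x) = 0 → p x = 0 := by
  obtain ⟨k, hk⟩ := eventually_atTop.mp ((g.eventually_isCompl_ker_pow_range_pow.and
    g.eventually_iSup_ker_pow_eq).and (eventually_ge_atTop 1))
  obtain ⟨⟨hc, hsup⟩, hk1⟩ := hk k le_rfl
  set p := (range (g ^ k)).projection (ker (g ^ k)) hc.symm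
  have hp : IsIdempotentElem p := Submodule.isIdempotentElem_projection _
  have hker : ker p = ker (g ^ k) := Submodule.ker_projection _
  have hrange : range p = range (g ^ k) := Submodule.range_projection _
  have hgk (x : M) : (g ^ k) (g x) = g ((g ^ k) x) :=
    LinearMap.congr_fun ((Commute.refl g).pow_left k).eq x
  refine ⟨p, hp, ((LinearMap.IsIdempotentElem.commute_iff hp).mpr ⟨?_, ?_⟩).symm,
    fun x => ?_, fun x hx => ?_⟩
  · rw [hrange, Module.End.mem_invtSubmodule_iff_forall_mem_of_mem]
    rintro _ ⟨y, rfl⟩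
    exact ⟨g y, hgk y⟩
  · rw [hker, Module.End.mem_invtSubmodule_iff_forall_mem_of_mem]
    intro x hx
    rw [LinearMap.mem_ker] at hx ⊢
    rw [hgk, hx, map_zero]
  · rw [← LinearMap.mem_ker, hker]
    refine ⟨fun h => ⟨k, h⟩, fun ⟨j, hj⟩ => ?_⟩
    rw [← hsup]
    exact Submodule.mem_iSup_of_mem j hj
  · have hker' : (g ^ k) (p x) = 0 := by
      rw [← Nat.sub_add_cancel hk1, pow_succ, Module.End.mul_apply, hx, map_zero]
    exact Submodule.disjoint_def.mp hc.disjoint _ hker' (hrange ▸ mem_range_self p x)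

namespace Matrix

theorem summable_map_ofReal_iff {ι m n : Type*} {f : ι → Matrix m n ℝ} :
    Summable (fun k => (f k).map Complex.ofReal) ↔ Summable f := by
  have (α : Type) [AddCommMonoid α] [TopologicalSpace α] (g : ι → Matrix m n α) :
      Summable g ↔ ∀ i j, Summable (fun k => g k i j) :=
    Pi.summable.trans (forall_congr' fun _ => Pi.summable)
  simp only [this, Matrix.map_apply, Complex.summable_ofReal]

theorem exists_nonneg_linearIndependent_span_eq_range {m n : Type*} [Fintype n]
    (M : Matrix m n ℝ) (hM : ∀ i j, 0 ≤ M i j) :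
    ∃ b : Set (m → ℝ), b ⊆ {x | ∀ i, 0 ≤ x i} ∧
      LinearIndependent ℝ (fun x : b => (x : m → ℝ)) ∧
      Submodule.span ℝ b = LinearMap.range M.mulVecLin := by
  obtain ⟨b, hbsub, hbspan, hbli⟩ := exists_linearIndependent ℝ (Set.range M.col)
  refine ⟨b, fun x hx i => ?_, hbli, by rw [hbspan, range_mulVecLin]⟩
  obtain ⟨j, rfl⟩ := hbsub hx
  exact hM i j

variable {n : Type*} [Fintype n]

theorem mulVec_le_mulVec {A : Matrix n n ℝ} (hA : ∀ i j, 0 ≤ A i j) {x y : n → ℝ} (h : x ≤ y) :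
    A *ᵥ x ≤ A *ᵥ y := fun i =>
  Finset.sum_le_sum fun j _ => mul_le_mul_of_nonneg_left (h j) (hA i j)

variable [DecidableEq n] {A : Matrix n n ℝ}

theorem exists_nonneg_ne_zero_smul_le_mulVec (hA : ∀ i j, 0 ≤ A i j)
    {μ : ℂ} (hμ : μ ∈ spectrum ℂ (A.map Complex.ofReal)) :
    ∃ x : n → ℝ, 0 ≤ x ∧ x ≠ 0 ∧ ‖μ‖ • x ≤ A *ᵥ x := by
  rw [← AlgEquiv.spectrum_eq Matrix.toLinAlgEquiv', ← Module.End.hasEigenvalue_iff_mem_spectrum]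
    at hμ
  obtain ⟨v, hv⟩ := hμ.exists_hasEigenvector
  have hAv : A.map Complex.ofReal *ᵥ v = μ • v := hv.apply_eq_smul
  refine ⟨fun i => ‖v i‖, fun i => norm_nonneg _,
    fun h => hv.2 (funext fun i => norm_eq_zero.mp (congrFun h i)), fun i => ?_⟩
  calc ‖μ‖ * ‖v i‖ = ‖∑ j, (A i j : ℂ) * v j‖ := by
        rw [← norm_mul, ← smul_eq_mul, ← Pi.smul_apply, ← hAv]; rfl
    _ ≤ ∑ j, A i j * ‖v j‖ := by
        refine (norm_sum_le _ _).trans_eq (Finset.sum_congr rfl fun j _ => ?_)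
        rw [norm_mul, Complex.norm_real, Real.norm_of_nonneg (hA i j)]

theorem pow_smul_le_pow_mulVec (hA : ∀ i j, 0 ≤ A i j) {r : ℝ} (hr : 0 ≤ r) {x : n → ℝ}
    (hx : r • x ≤ A *ᵥ x) (k : ℕ) : r ^ k • x ≤ A ^ k *ᵥ x := by
  induction k with
  | zero => simp
  | succ k ih =>
    calc r ^ (k + 1) • x = r ^ k • (r • x) := by rw [pow_succ, mul_smul]
      _ ≤ r ^ k • (A *ᵥ x) := smul_le_smul_of_nonneg_left hx (pow_nonneg hr k)
      _ = A *ᵥ (r ^ k • x) := (mulVec_smul A _ x).symm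
      _ ≤ A *ᵥ (A ^ k *ᵥ x) := mulVec_le_mulVec hA ih
      _ = A ^ (k + 1) *ᵥ x := by rw [mulVec_mulVec, pow_succ']

section

attribute [local instance] Matrix.linftyOpNormedRing Matrix.linftyOpNormedAlgebra

theorem summable_pow_inv_smul {t : ℝ}
    (ht : spectralRadius ℂ (A.map Complex.ofReal) < ENNReal.ofReal t) :
    Summable (fun k => (t⁻¹ • A) ^ k) := by
  obtain ⟨q, hρq, hqt⟩ := ENNReal.lt_iff_exists_nnreal_btwn.mp ht
  have hqt : (q : ℝ) < t := by simpa using ENNReal.coe_lt_ofReal.mp hqt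
  have ht0 : 0 < t := q.2.trans_lt hqt
  have hmap (k : ℕ) :
      ((t⁻¹ • A) ^ k).map Complex.ofReal = (t⁻¹ : ℂ) ^ k • A.map Complex.ofReal ^ k := by
    rw [← smul_pow]
    refine (Matrix.map_pow _ Complex.ofRealHom k).trans (congrArg (· ^ k) ?_)
    ext i j
    simp
  rw [← summable_map_ofReal_iff]
  simp_rw [hmap]
  refine .of_norm_bounded_eventually_nat
    (summable_geometric_of_lt_one (by positivity) ((div_lt_one ht0).mpr hqt)) ?_
  filter_upwards [spectrum.eventually_nnnorm_pow_le hρq] with k hk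
  rw [norm_smul, norm_pow, norm_inv, Complex.norm_real, Real.norm_of_nonneg ht0.le, div_pow,
    div_eq_inv_mul, inv_pow]
  gcongr
  exact_mod_cast hk

end

theorem mem_resolventSet_and_hasSum_resolvent {t : ℝ}
    (ht : spectralRadius ℂ (A.map Complex.ofReal) < ENNReal.ofReal t) :
    t ∈ resolventSet ℝ A ∧ HasSum (fun k => (t ^ (k + 1))⁻¹ • A ^ k) (resolvent A t) := by
  have ht0 : 0 < t := ENNReal.ofReal_pos.mp (lt_of_le_of_lt bot_le ht)
  have hsum := summable_pow_inv_smul ht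
  have hdecomp : algebraMap ℝ (Matrix n n ℝ) t - A = t • (1 - t⁻¹ • A) := by
    rw [smul_sub, smul_smul, mul_inv_cancel₀ ht0.ne', one_smul, Algebra.algebraMap_eq_smul_one]
  have hinv : (t⁻¹ • ∑' k, (t⁻¹ • A) ^ k) * (algebraMap ℝ (Matrix n n ℝ) t - A) = 1 := by
    rw [hdecomp, smul_mul_smul_comm, inv_mul_cancel₀ ht0.ne', one_smul,
      hsum.tsum_pow_mul_one_sub]
  have hinv' : (algebraMap ℝ (Matrix n n ℝ) t - A) * (t⁻¹ • ∑' k, (t⁻¹ • A) ^ k) = 1 := by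
    rw [hdecomp, smul_mul_smul_comm, mul_inv_cancel₀ ht0.ne', one_smul,
      hsum.one_sub_mul_tsum_pow]
  refine ⟨⟨⟨_, _, hinv', hinv⟩, rfl⟩, ?_⟩
  have hR : resolvent A t = t⁻¹ • ∑' k, (t⁻¹ • A) ^ k :=
    Ring.inverse_unit (⟨_, _, hinv', hinv⟩ : (Matrix n n ℝ)ˣ)
  rw [hR]
  convert hsum.hasSum.const_smul t⁻¹ using 2 with k
  rw [smul_pow, smul_smul, ← pow_succ', inv_pow]

theorem resolvent_apply_nonneg (hA : ∀ i j, 0 ≤ A i j) {t : ℝ}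
    (ht : spectralRadius ℂ (A.map Complex.ofReal) < ENNReal.ofReal t) (i j : n) :
    0 ≤ resolvent A t i j := by
  have ht0 : 0 < t := ENNReal.ofReal_pos.mp (lt_of_le_of_lt bot_le ht)
  have hR := (mem_resolventSet_and_hasSum_resolvent ht).2
  refine ((Pi.hasSum.mp ((Pi.hasSum.mp hR) i)) j).nonneg fun k => ?_
  exact mul_nonneg (by positivity) (pow_apply_nonneg hA k i j)

theorem inv_sub_smul_le_resolvent_mulVec (hA : ∀ i j, 0 ≤ A i j) {r t : ℝ} (hr : 0 ≤ r)
    (hρ : spectralRadius ℂ (A.map Complex.ofReal) ≤ ENNReal.ofReal r) (hrt : r < t)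
    {x : n → ℝ} (hx : r • x ≤ A *ᵥ x) : (t - r)⁻¹ • x ≤ resolvent A t *ᵥ x := by
  have ht0 : 0 < t := hr.trans_lt hrt
  have hρt := hρ.trans_lt ((ENNReal.ofReal_lt_ofReal_iff ht0).mpr hrt)
  have hR := (mem_resolventSet_and_hasSum_resolvent hρt).2.map (mulVec.addMonoidHomLeft x)
    (continuous_id.matrix_mulVec continuous_const)
  have hgeom : HasSum (fun k => ((t ^ (k + 1))⁻¹ * r ^ k) • x) ((t - r)⁻¹ • x) := by
    refine HasSum.smul_const ?_ x
    have hterm (k : ℕ) : (t ^ (k + 1))⁻¹ * r ^ k = t⁻¹ * (r / t) ^ k := by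
      rw [div_pow, div_eq_mul_inv, pow_succ', mul_inv]; ring
    have hsum : (t - r)⁻¹ = t⁻¹ * (1 - r / t)⁻¹ := by
      rw [← mul_inv, mul_sub, mul_one, mul_div_cancel₀ _ ht0.ne']
    simpa only [hterm, hsum] using (hasSum_geometric_of_lt_one (div_nonneg hr ht0.le)
      ((div_lt_one ht0).mpr hrt)).mul_left t⁻¹
  refine hasSum_le (fun k => ?_) hgeom hR
  simp only [Function.comp_apply, mulVec.addMonoidHomLeft, AddMonoidHom.coe_mk, ZeroHom.coe_mk,
    smul_mulVec, mul_smul]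
  exact smul_le_smul_of_nonneg_left (pow_smul_le_pow_mulVec hA hr hx k) (by positivity)

theorem tendsto_inv_of_isUnit {M : ℝ → Matrix n n ℝ} (hM : Continuous M) {r : ℝ}
    (hr : IsUnit (M r)) : Tendsto (fun t => (M t)⁻¹) (𝓝 r) (𝓝 (M r)⁻¹) := by
  have hdet : (M r).det ≠ 0 := ((isUnit_iff_isUnit_det _).mp hr).ne_zero
  refine (continuousAt_matrix_inv _ ?_).tendsto.comp (hM.tendsto r)
  rw [Ring.inverse_eq_inv']
  exact continuousAt_inv₀ hdet

theorem mem_spectrum_of_smul_le_mulVec (hA : ∀ i j, 0 ≤ A i j) {r : ℝ} (hr : 0 ≤ r)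
    (hρ : spectralRadius ℂ (A.map Complex.ofReal) ≤ ENNReal.ofReal r) {x : n → ℝ} (hx0 : 0 ≤ x)
    (hx : x ≠ 0) (hAx : r • x ≤ A *ᵥ x) : r ∈ spectrum ℝ A := by
  intro hres
  obtain ⟨i, hi⟩ : ∃ i, 0 < x i := by
    by_contra! h
    exact hx (funext fun i => le_antisymm (h i) (hx0 i))
  have hM : Continuous fun t : ℝ => algebraMap ℝ (Matrix n n ℝ) t - A := by fun_prop
  have hlim : Tendsto (fun t => (resolvent A t *ᵥ x) i) (𝓝[>] r) (𝓝 ((resolvent A r *ᵥ x) i)) := by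
    simp only [resolvent, ← nonsing_inv_eq_ringInverse]
    exact (((continuous_apply i).comp (continuous_id.matrix_mulVec continuous_const)).tendsto _
      ).comp ((tendsto_inv_of_isUnit hM hres).mono_left nhdsWithin_le_nhds)
  have hpole : Tendsto (fun t => (t - r)⁻¹ * x i) (𝓝[>] r) atTop := by
    refine (tendsto_inv_nhdsGT_zero.comp (tendsto_nhdsWithin_iff.mpr ⟨?_, ?_⟩)).atTop_mul_const hi
    · simpa using (tendsto_id.sub_const r).mono_left (nhdsWithin_le_nhds (a := r))
    · exact eventually_nhdsWithin_of_forall fun t ht => Set.mem_Ioi.mpr (sub_pos.mpr ht)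
  refine not_tendsto_atTop_of_tendsto_nhds hlim (tendsto_atTop_mono' _ ?_ hpole)
  filter_upwards [self_mem_nhdsWithin] with t ht
  exact inv_sub_smul_le_resolvent_mulVec hA hr hρ ht hAx i

theorem tendsto_resolvent_mul_of_isIdempotentElem {P : Matrix n n ℝ} {r : ℝ}
    (hP : IsIdempotentElem P) (hAP : Commute A P) (hr : IsUnit (1 - P - (A - r • 1) * P))
    {l : Filter ℝ} (hl : l ≤ 𝓝 r) (hres : ∀ᶠ t in l, t ∈ resolventSet ℝ A) :
    Tendsto (fun t => resolvent A t * P) l (𝓝 ((1 - P - (A - r • 1) * P)⁻¹ * P)) := by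
  -- `M t` is `t - A` on the range of `P` and the identity on its kernel.
  set M : ℝ → Matrix n n ℝ := fun t => 1 - P - (A - t • 1) * P
  have hM : Continuous M := by fun_prop
  have hdet : (M r).det ≠ 0 := ((isUnit_iff_isUnit_det _).mp hr).ne_zero
  refine (((tendsto_inv_of_isUnit hM hr).mono_left hl).mul_const P).congr' ?_
  filter_upwards [hres, hl (hM.matrix_det.continuousAt.eventually_ne hdet)] with t ht hdett
  have hRP : resolvent A t * P = P * resolvent A t := (hAP.resolvent_left t).eq
  have hR : (A - t • 1) * resolvent A t = -1 := by
    rw [← neg_sub, neg_mul, ← Algebra.algebraMap_eq_smul_one, resolvent,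
      Ring.mul_inverse_cancel _ ht]
  have hPRP : P * (resolvent A t * P) = resolvent A t * P := by
    rw [← mul_assoc, ← hRP, mul_assoc, hP.eq]
  have hMR : M t * (resolvent A t * P) = P := by
    calc M t * (resolvent A t * P)
        = (1 - P) * (resolvent A t * P) - (A - t • 1) * (P * (resolvent A t * P)) := by
          simp only [M, sub_mul, mul_assoc]
      _ = P := by
          rw [sub_mul, one_mul, hPRP, sub_self, zero_sub, ← mul_assoc, hR, neg_mul, one_mul,
            neg_neg]
  calc (M t)⁻¹ * P = (M t)⁻¹ * (M t * (resolvent A t * P)) := by rw [hMR]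
    _ = resolvent A t * P := by
      rw [← mul_assoc, nonsing_inv_mul _ (isUnit_iff_ne_zero.mpr hdett), one_mul]

theorem isUnit_one_sub_sub_mul {K : Type*} [Field K] {N P : Matrix n n K}
    (hP : IsIdempotentElem P) (hNP : Commute N P) (hN : ∀ y, N *ᵥ (P *ᵥ y) = 0 → P *ᵥ y = 0) :
    IsUnit (1 - P - N * P) := by
  refine mulVec_injective_iff_isUnit.mp
    ((injective_iff_map_eq_zero (1 - P - N * P).mulVecLin).mpr fun x hx => ?_)
  rw [mulVecLin_apply] at hx
  have hPM : P * (1 - P - N * P) = -(N * P) := by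
    rw [mul_sub, mul_sub, mul_one, hP.eq, sub_self, zero_sub, ← mul_assoc, ← hNP.eq, mul_assoc,
      hP.eq]
  have hPx : P *ᵥ x = 0 := by
    refine hN x ?_
    have := congrArg (P *ᵥ ·) hx
    simpa [mulVec_mulVec, hPM, neg_mulVec] using this
  simpa [sub_mulVec, ← mulVec_mulVec, hPx] using hx

theorem tendsto_pow_smul_resolvent {P : Matrix n n ℝ} {r : ℝ} {ν : ℕ} (hν : 0 < ν)
    (hP : IsIdempotentElem P) (hAP : Commute A P)
    (hN : ∀ y, (A - r • 1) *ᵥ (P *ᵥ y) = 0 → P *ᵥ y = 0) (hK : (A - r • 1) ^ ν * (1 - P) = 0)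
    {l : Filter ℝ} (hl : l ≤ 𝓝 r) (hres : ∀ᶠ t in l, t ∈ resolventSet ℝ A) :
    Tendsto (fun t => (t - r) ^ ν • resolvent A t) l (𝓝 ((A - r • 1) ^ (ν - 1) * (1 - P))) := by
  have hNP : Commute (A - r • 1) P := hAP.sub_left ((Commute.one_left P).smul_left r)
  have hGE := tendsto_pow_smul_resolvent_mul (b := 1 - P) hν
    (by rwa [Algebra.algebraMap_eq_smul_one]) hl hres
  rw [Algebra.algebraMap_eq_smul_one] at hGE
  have hW := tendsto_resolvent_mul_of_isIdempotentElem hP hAP (isUnit_one_sub_sub_mul hP hNP hN)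
    hl hres
  have hc : Tendsto (fun t : ℝ => (t - r) ^ ν) l (𝓝 0) := by
    have : Continuous fun t : ℝ => (t - r) ^ ν := by fun_prop
    simpa [zero_pow hν.ne'] using (this.tendsto r).mono_left hl
  have := hGE.add (hc.smul hW)
  rw [zero_smul, add_zero] at this
  refine this.congr fun t => ?_
  rw [← smul_mul_assoc, ← mul_add, sub_add_cancel, mul_one]

theorem exists_fitting_projection {K : Type*} [Field K] (N : Matrix n n K) :
    ∃ P : Matrix n n K, IsIdempotentElem P ∧ Commute N P ∧
      (∀ x, P *ᵥ x = 0 ↔ ∃ k, N ^ k *ᵥ x = 0) ∧ ∀ x, N *ᵥ (P *ᵥ x) = 0 → P *ᵥ x = 0 := by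
  obtain ⟨p, hp, hNp, hker, hinj⟩ :=
    Module.End.exists_fitting_projection (toLinAlgEquiv' N)
  have hP (x : n → K) : LinearMap.toMatrixAlgEquiv' p *ᵥ x = p x :=
    LinearMap.toMatrix'_mulVec p x
  refine ⟨LinearMap.toMatrixAlgEquiv' p, hp.map _, ?_, fun x => ?_, fun x => ?_⟩
  · simpa using hNp.map LinearMap.toMatrixAlgEquiv'
  · simpa [hP, ← map_pow] using hker x
  · rw [hP]
    exact hinj x

end Matrix

theorem GEsub_eq_range_one_sub {m : ℕ} {A P : Matrix (Fin m) (Fin m) ℝ} {r : ℝ}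
    (hP : IsIdempotentElem P) (hker : ∀ x, P *ᵥ x = 0 ↔ ∃ k, (A - r • 1) ^ k *ᵥ x = 0) :
    GEsub A r = LinearMap.range (1 - P).mulVecLin := by
  ext x
  refine ⟨fun ⟨k, _, hk⟩ => ⟨x, ?_⟩, ?_⟩
  · rw [mulVecLin_apply, sub_mulVec, one_mulVec, (hker x).mpr ⟨k, hk⟩, sub_zero]
  · rintro ⟨y, rfl⟩
    obtain ⟨k, hk⟩ := (hker ((1 - P) *ᵥ y)).mp
      (by rw [mulVec_mulVec, mul_sub, mul_one, hP.eq, sub_self, zero_mulVec])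
    exact ⟨k + 1, by omega, by rw [pow_succ', ← mulVec_mulVec, mulVecLin_apply, hk, mulVec_zero]⟩

theorem exists_nonneg_linearIndependent_span_eq_map_GEsub {m : ℕ} {A : Matrix (Fin m) (Fin m) ℝ}
    (hA : ∀ i j, 0 ≤ A i j) {r : ℝ} (hr : 0 ≤ r)
    (hρ : spectralRadius ℂ (A.map Complex.ofReal) ≤ ENNReal.ofReal r) {ν : ℕ} (hν : 0 < ν)
    (hkill : ∀ x ∈ GEsub A r, (A - r • 1) ^ ν *ᵥ x = 0) :
    ∃ b : Set (Fin m → ℝ), b ⊆ {x | ∀ i, 0 ≤ x i} ∧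
      LinearIndependent ℝ (fun x : b => (x : Fin m → ℝ)) ∧
      Submodule.span ℝ b = Submodule.map ((A - r • 1) ^ (ν - 1)).mulVecLin (GEsub A r) := by
  have hρt (t : ℝ) (ht : r < t) : spectralRadius ℂ (A.map Complex.ofReal) < ENNReal.ofReal t :=
    hρ.trans_lt ((ENNReal.ofReal_lt_ofReal_iff (hr.trans_lt ht)).mpr ht)
  obtain ⟨P, hP, hNP, hker, hinj⟩ := exists_fitting_projection (A - r • 1)
  have hAP : Commute A P := by simpa using hNP.add_left ((Commute.one_left P).smul_left r)
  have hGE := GEsub_eq_range_one_sub hP hker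
  have hK : (A - r • 1) ^ ν * (1 - P) = 0 := by
    refine Matrix.toLin'.injective (LinearMap.ext fun x => ?_)
    rw [toLin'_apply, map_zero, LinearMap.zero_apply, ← mulVec_mulVec]
    exact hkill _ (hGE ▸ LinearMap.mem_range_self _ x)
  have hlim := tendsto_pow_smul_resolvent hν hP hAP hinj hK (nhdsWithin_le_nhds (s := Set.Ioi r))
    (eventually_nhdsWithin_of_forall fun t ht =>
      (mem_resolventSet_and_hasSum_resolvent (hρt t ht)).1)
  have hL (i j : Fin m) : 0 ≤ ((A - r • 1) ^ (ν - 1) * (1 - P)) i j :=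
    ge_of_tendsto (((continuous_apply j).comp (continuous_apply i)).tendsto _ |>.comp hlim)
      (eventually_nhdsWithin_of_forall (s := Set.Ioi r) fun t ht => mul_nonneg
        (pow_nonneg (sub_pos.mpr ht).le ν) (resolvent_apply_nonneg hA (hρt t ht) i j))
  obtain ⟨b, hb, hbli, hbspan⟩ := exists_nonneg_linearIndependent_span_eq_range _ hL
  refine ⟨b, hb, hbli, ?_⟩
  rw [hbspan, mulVecLin_mul, LinearMap.range_comp, ← hGE]

theorem stmt9_general {m : ℕ} (A : Matrix (Fin m) (Fin m) ℝ)
    (hA : ∀ i j, 0 ≤ A i j) (r : ℝ)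
    (hr : IsGreatest {x : ℝ | ∃ μ ∈ spectrum ℂ (A.map Complex.ofReal), x = ‖μ‖} r) :
    r ∈ spectrum ℝ A ∧
    ∀ ν : ℕ, 0 < ν →
      (∀ x ∈ GEsub A r, ((A - r • 1) ^ ν).mulVec x = 0) →
      (∀ k : ℕ, 0 < k → (∀ x ∈ GEsub A r, ((A - r • 1) ^ k).mulVec x = 0) → ν ≤ k) →
      ∃ b : Set (Fin m → ℝ), b ⊆ {x | ∀ i, 0 ≤ x i} ∧
        LinearIndependent ℝ (fun x : b => (x : Fin m → ℝ)) ∧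
        Submodule.span ℝ b =
          Submodule.map (Matrix.mulVecLin ((A - r • 1) ^ (ν - 1))) (GEsub A r) := by
  obtain ⟨μ, hμ, hrμ⟩ := hr.1
  have hr0 : 0 ≤ r := hrμ ▸ norm_nonneg μ
  have hρ : spectralRadius ℂ (A.map Complex.ofReal) ≤ ENNReal.ofReal r :=
    iSup₂_le fun μ hμ => by
      rw [← ENNReal.ofReal_coe_nnreal, coe_nnnorm]
      exact ENNReal.ofReal_le_ofReal (hr.2 ⟨μ, hμ, rfl⟩)
  refine ⟨?_, fun ν hν hkill _ =>
    exists_nonneg_linearIndependent_span_eq_map_GEsub hA hr0 hρ hν hkill⟩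
  obtain ⟨x, hx0, hx, hAx⟩ := exists_nonneg_ne_zero_smul_le_mulVec hA hμ
  exact mem_spectrum_of_smul_le_mulVec hA hr0 hρ hx0 hx (hrμ ▸ hAx)

/-- If A (m ≥ 1) has nonnegative entries and spectral radius r, then r is an
eigenvalue of A and, for ν the cyclic order of GE_r(A), the dominant eigenspace
(A − rI)^{ν−1}(GE_r(A)) has a basis consisting of nonnegative vectors. -/
theorem stmt9 {m : ℕ} (hm : 0 < m) (A : Matrix (Fin m) (Fin m) ℝ)
    (hA : ∀ i j, 0 ≤ A i j) (r : ℝ)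
    (hr : IsGreatest {x : ℝ | ∃ μ ∈ spectrum ℂ (A.map Complex.ofReal), x = ‖μ‖} r) :
    r ∈ spectrum ℝ A ∧
    ∀ ν : ℕ, 0 < ν →
      (∀ x ∈ GEsub A r, ((A - r • 1) ^ ν).mulVec x = 0) →
      (∀ k : ℕ, 0 < k → (∀ x ∈ GEsub A r, ((A - r • 1) ^ k).mulVec x = 0) → ν ≤ k) →
      ∃ b : Set (Fin m → ℝ), b ⊆ {x | ∀ i, 0 ≤ x i} ∧
        LinearIndependent ℝ (fun x : b => (x : Fin m → ℝ)) ∧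
        Submodule.span ℝ b =
          Submodule.map (Matrix.mulVecLin ((A - r • 1) ^ (ν - 1))) (GEsub A r) :=
  stmt9_general A hA r hr
end
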